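/- Soundness and completeness of subgraph abstraction: for arrangements α and β of G with a partition into induced subgraphs, there exists an abstract plan from γ(α) to γ(β) if and only if there exists a concrete plan from α to β in G. -/

import Mathlib

open scoped Classical

/-- An arrangement of robots `R` on vertices `V`: an injective partial map `V ⇀ R`. -/
abbrev Arrangement (V R : Type) := V → Option R

/-- Injectivity of an arrangement: no robot occupies two vertices. -/
def ArrInj {V R : Type} (a : Arrangement V R) : Prop :=
  ∀ u v r, a u = some r → a v = some r → u = v

/-- A plan-step `(r, u, v)` is applicable if `r` is at `u`, `v` is unoccupied,
and `(u,v)` is an edge. -/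
def Applicable {V R : Type} (G : SimpleGraph V) (a : Arrangement V R)
    (s : R × V × V) : Prop :=
  G.Adj s.2.1 s.2.2 ∧ a s.2.1 = some s.1 ∧ a s.2.2 = none

/-- Applying a plan-step: move the robot from `u` to `v`. -/
noncomputable def applyStep {V R : Type} (a : Arrangement V R) (s : R × V × V) :
    Arrangement V R :=
  fun w => if w = s.2.2 then some s.1 else if w = s.2.1 then none else a w

/-- `IsPlan G P a b`: the sequence of plan-steps `P` is a valid concrete plan in `G`
transforming arrangement `a` into arrangement `b`. -/
def IsPlan {V R : Type} (G : SimpleGraph V) :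
    List (R × V × V) → Arrangement V R → Arrangement V R → Prop
  | [], a, b => a = b
  | s :: P, a, b => Applicable G a s ∧ IsPlan G P (applyStep a s) b

/-- Mutual reachability by plans confined to the vertex set `S` (an induced
subgraph of `G`). -/
def SimIn {V R : Type} (G : SimpleGraph V) (S : Set V) (a b : Arrangement V R) : Prop :=
  (∃ P : List (R × V × V), (∀ s ∈ P, s.2.1 ∈ S ∧ s.2.2 ∈ S) ∧ IsPlan G P a b) ∧
  (∃ Q : List (R × V × V), (∀ s ∈ Q, s.2.1 ∈ S ∧ s.2.2 ∈ S) ∧ IsPlan G Q b a)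

/-- The configuration (equivalence class) of the arrangement `a` within the
subgraph `S` of `G`. -/
def clsIn {V R : Type} (G : SimpleGraph V) (S : Set V) (a : Arrangement V R) :
    Set (Arrangement V R) :=
  {b | SimIn G S a b}

/-- The arrangement `a ⊖ r`: remove robot `r`. -/
noncomputable def removeR {V R : Type} (a : Arrangement V R) (r : R) : Arrangement V R :=
  fun w => if a w = some r then none else a w

/-- The arrangement `a ⊕ (r, v)`: add robot `r` at vertex `v`. -/
noncomputable def addR {V R : Type} (a : Arrangement V R) (r : R) (v : V) :
    Arrangement V R :=
  fun w => if w = v then some r else a w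

/-- `c ⊖ (r, u)`: the set of configurations obtained from configuration `c` by
removing robot `r` exiting via vertex `u`. -/
def ominusC {V R : Type} (G : SimpleGraph V) (S : Set V)
    (c : Set (Arrangement V R)) (r : R) (u : V) : Set (Set (Arrangement V R)) :=
  {C | ∃ a ∈ c, a u = some r ∧ C = clsIn G S (removeR a r)}

/-- `c ⊕ (r, v)`: the set of configurations obtained from configuration `c` by
adding robot `r` entering at vertex `v`. -/
def oplusC {V R : Type} (G : SimpleGraph V) (S : Set V)
    (c : Set (Arrangement V R)) (r : R) (v : V) : Set (Set (Arrangement V R)) :=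
  {C | ∃ a ∈ c, a v = none ∧ C = clsIn G S (addR a r v)}

/-- The restriction `a / S` of an arrangement to a vertex set. -/
noncomputable def restrictArr {V R : Type} (a : Arrangement V R) (S : Set V) :
    Arrangement V R :=
  fun v => if v ∈ S then a v else none

/-- The configuration tuple `γ(a)` of an arrangement: the tuple of configurations
induced by `a` on each subgraph of the partition. -/
noncomputable def gammaOf {V R : Type} {m : ℕ} (G : SimpleGraph V)
    (S : Fin m → Set V) (a : Arrangement V R) : Fin m → Set (Arrangement V R) :=
  fun i => clsIn G (S i) (restrictArr a (S i))

/-- `AbstractPlan G S γ γ'`: there is an abstract plan (a sequence of subgraph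
transitions, each applicable to the current configuration tuple, with each
successive tuple resulting from applying the transition) from configuration tuple
`γ` to configuration tuple `γ'`. -/
inductive AbstractPlan {V R : Type} {m : ℕ} (G : SimpleGraph V) (S : Fin m → Set V) :
    (Fin m → Set (Arrangement V R)) → (Fin m → Set (Arrangement V R)) → Prop
  | refl (γ : Fin m → Set (Arrangement V R)) : AbstractPlan G S γ γ
  | step (γ γ' γ'' : Fin m → Set (Arrangement V R)) (r : R) (u v : V) (x y : Fin m) :
      x ≠ y → u ∈ S x → v ∈ S y → G.Adj u v →
      γ' x ∈ ominusC G (S x) (γ x) r u →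
      γ' y ∈ oplusC G (S y) (γ y) r v →
      (∀ z : Fin m, z ≠ x → z ≠ y → γ' z = γ z) →
      AbstractPlan G S γ' γ'' → AbstractPlan G S γ γ''

/-!
A concrete step either stays inside one subgraph, where it does not change the configuration
tuple because a configuration is closed under moves within its subgraph, or it crosses from
`S x` to `S y`, where it is a subgraph transition witnessed by the current restrictions
(injectivity makes removing the robot by name agree with vacating `u`).

Conversely, a plan confined to one subgraph lifts from the restriction to the whole arrangement
without touching the other, disjoint, subgraphs; fixing the subgraphs one after the other,
arrangements with equal configuration tuples are joined by a concrete plan. A subgraph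
transition is realized by first moving to the representatives of the current configurations
that it removes the robot from and adds it to, and then moving the robot from `u` to `v`.
-/

section Plans

variable {V R : Type} {G : SimpleGraph V}

lemma applyStep_apply_of_ne {a : Arrangement V R} {s : R × V × V} {w : V}
    (h₁ : w ≠ s.2.1) (h₂ : w ≠ s.2.2) : applyStep a s w = a w := by
  simp [applyStep, h₁, h₂]

lemma ArrInj.applyStep {a : Arrangement V R} {s : R × V × V} (ha : ArrInj a)
    (hs : Applicable G a s) : ArrInj (applyStep a s) := by
  obtain ⟨-, hu, hv⟩ := hs
  intro w w' r hw hw'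
  simp only [_root_.applyStep] at hw hw'
  split_ifs at hw hw' <;> grind [ArrInj]

lemma IsPlan.append {P Q : List (R × V × V)} {a b c : Arrangement V R}
    (hP : IsPlan G P a b) (hQ : IsPlan G Q b c) : IsPlan G (P ++ Q) a c := by
  induction P generalizing a with
  | nil => exact (show a = b from hP) ▸ hQ
  | cons s P ih => exact ⟨hP.1, ih hP.2⟩

lemma IsPlan.arrInj {P : List (R × V × V)} {a b : Arrangement V R}
    (hP : IsPlan G P a b) (ha : ArrInj a) : ArrInj b := by
  induction P generalizing a with
  | nil => exact (show a = b from hP) ▸ ha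
  | cons s P ih => exact ih hP.2 (ha.applyStep hP.1)

lemma IsPlan.apply_eq_of_notMem {S : Set V} {P : List (R × V × V)} {a b : Arrangement V R}
    (hP : IsPlan G P a b) (hPS : ∀ s ∈ P, s.2.1 ∈ S ∧ s.2.2 ∈ S) {w : V} (hw : w ∉ S) :
    b w = a w := by
  induction P generalizing a with
  | nil => exact (show a = b from hP) ▸ rfl
  | cons s P ih =>
    obtain ⟨h₁, h₂⟩ := hPS s List.mem_cons_self
    rw [ih hP.2 (fun t ht => hPS t (List.mem_cons_of_mem s ht)),
      applyStep_apply_of_ne (ne_of_mem_of_not_mem h₁ hw).symm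
        (ne_of_mem_of_not_mem h₂ hw).symm]

lemma applyStep_swap_cancel {a : Arrangement V R} {r : R} {u v : V}
    (h : Applicable G a (r, u, v)) : applyStep (applyStep a (r, u, v)) (r, v, u) = a := by
  obtain ⟨hadj, hu, hv⟩ := h
  funext w
  simp only [applyStep]
  split_ifs <;> simp_all

lemma Applicable.swap {a : Arrangement V R} {r : R} {u v : V} (h : Applicable G a (r, u, v)) :
    Applicable G (applyStep a (r, u, v)) (r, v, u) :=
  ⟨h.1.symm, by simp [applyStep], by simp [applyStep, G.ne_of_adj h.1]⟩

end Plans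

section Restriction

variable {V R : Type} {G : SimpleGraph V} {S : Set V}

lemma restrictArr_apply_of_mem {a : Arrangement V R} {w : V} (hw : w ∈ S) :
    restrictArr a S w = a w :=
  if_pos hw

lemma restrictArr_applyStep {a : Arrangement V R} {s : R × V × V} (h : s.2.2 ∈ S) :
    restrictArr (applyStep a s) S = applyStep (restrictArr a S) s := by
  funext w
  by_cases hw : w ∈ S
  · simp [restrictArr, applyStep, hw]
  · simp [restrictArr, applyStep, hw, (ne_of_mem_of_not_mem h hw).symm]

lemma restrictArr_applyStep_of_notMem {a : Arrangement V R} {s : R × V × V}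
    (h₁ : s.2.1 ∉ S) (h₂ : s.2.2 ∉ S) :
    restrictArr (applyStep a s) S = restrictArr a S := by
  funext w
  by_cases hw : w ∈ S
  · simp [restrictArr, hw, applyStep_apply_of_ne (ne_of_mem_of_not_mem hw h₁)
      (ne_of_mem_of_not_mem hw h₂)]
  · simp [restrictArr, hw]

lemma restrictArr_applyStep_of_mem_of_notMem {a : Arrangement V R} {r : R} {u v : V}
    (ha : ArrInj a) (hau : a u = some r) (hu : u ∈ S) (hv : v ∉ S) :
    restrictArr (applyStep a (r, u, v)) S = removeR (restrictArr a S) r := by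
  funext w
  by_cases hw : w ∈ S
  · have hwv : w ≠ v := ne_of_mem_of_not_mem hw hv
    by_cases hwu : w = u
    · subst hwu
      simp [restrictArr, applyStep, removeR, hw, hwv, hau]
    · have : a w ≠ some r := fun h => hwu (ha w u r h hau)
      simp [restrictArr, applyStep, removeR, hw, hwv, hwu, this]
  · simp [restrictArr, removeR, hw]

lemma restrictArr_applyStep_of_notMem_of_mem {a : Arrangement V R} {s : R × V × V}
    (hu : s.2.1 ∉ S) (hv : s.2.2 ∈ S) :
    restrictArr (applyStep a s) S = addR (restrictArr a S) s.1 s.2.2 := by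
  funext w
  by_cases hw : w ∈ S
  · simp [restrictArr, applyStep, addR, hw, ne_of_mem_of_not_mem hw hu]
  · simp [restrictArr, addR, hw, (ne_of_mem_of_not_mem hv hw).symm]

lemma restrictArr_piecewise_self (f g : Arrangement V R) :
    restrictArr (S.piecewise f g) S = restrictArr f S := by
  funext w
  by_cases hw : w ∈ S <;> simp [restrictArr, hw]

lemma restrictArr_piecewise_of_disjoint {T : Set V} (h : Disjoint T S) (f g : Arrangement V R) :
    restrictArr (T.piecewise f g) S = restrictArr g S := by
  funext w
  by_cases hw : w ∈ S
  · simp [restrictArr, hw, h.notMem_of_mem_right hw]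
  · simp [restrictArr, hw]

lemma restrictArr_eq_self {a : Arrangement V R} (h : ∀ w ∉ S, a w = none) :
    restrictArr a S = a := by
  funext w
  by_cases hw : w ∈ S <;> simp [restrictArr, hw, h]

lemma IsPlan.piecewise_of_restrictArr {P : List (R × V × V)} {a c : Arrangement V R}
    (hPS : ∀ s ∈ P, s.2.1 ∈ S ∧ s.2.2 ∈ S) (hP : IsPlan G P (restrictArr a S) c) :
    IsPlan G P a (S.piecewise c a) := by
  induction P generalizing a with
  | nil =>
    rw [← show restrictArr a S = c from hP]
    funext w
    by_cases hw : w ∈ S <;> simp [restrictArr, hw]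
  | cons s P ih =>
    obtain ⟨h₁, h₂⟩ := hPS s List.mem_cons_self
    obtain ⟨⟨hadj, hu, hv⟩, hP⟩ := hP
    rw [restrictArr_apply_of_mem h₁] at hu
    rw [restrictArr_apply_of_mem h₂] at hv
    rw [← restrictArr_applyStep h₂] at hP
    have hpiece : S.piecewise c (applyStep a s) = S.piecewise c a := by
      funext w
      by_cases hw : w ∈ S
      · simp [hw]
      · simp [hw, applyStep_apply_of_ne (ne_of_mem_of_not_mem h₁ hw).symm
          (ne_of_mem_of_not_mem h₂ hw).symm]
    exact ⟨⟨hadj, hu, hv⟩, hpiece ▸ ih (fun t ht => hPS t (List.mem_cons_of_mem s ht)) hP⟩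

end Restriction

section Configurations

variable {V R : Type} {G : SimpleGraph V} {S : Set V}

lemma SimIn.refl (a : Arrangement V R) : SimIn G S a a :=
  ⟨⟨[], by simp, rfl⟩, ⟨[], by simp, rfl⟩⟩

lemma SimIn.symm {a b : Arrangement V R} (h : SimIn G S a b) : SimIn G S b a :=
  ⟨h.2, h.1⟩

lemma SimIn.trans {a b c : Arrangement V R} (hab : SimIn G S a b) (hbc : SimIn G S b c) :
    SimIn G S a c := by
  obtain ⟨⟨P, hPS, hP⟩, ⟨Q, hQS, hQ⟩⟩ := hab
  obtain ⟨⟨P', hPS', hP'⟩, ⟨Q', hQS', hQ'⟩⟩ := hbc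
  refine ⟨⟨P ++ P', ?_, hP.append hP'⟩, ⟨Q' ++ Q, ?_, hQ'.append hQ⟩⟩ <;>
    simp only [List.mem_append] <;> rintro s (hs | hs)
  exacts [hPS s hs, hPS' s hs, hQS' s hs, hQS s hs]

lemma SimIn.applyStep {a : Arrangement V R} {r : R} {u v : V} (hu : u ∈ S) (hv : v ∈ S)
    (h : Applicable G a (r, u, v)) : SimIn G S a (applyStep a (r, u, v)) :=
  ⟨⟨[(r, u, v)], by simp [hu, hv], h, rfl⟩,
    ⟨[(r, v, u)], by simp [hu, hv], h.swap, applyStep_swap_cancel h⟩⟩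

lemma clsIn_eq_of_mem {a b : Arrangement V R} (h : b ∈ clsIn G S a) :
    clsIn G S b = clsIn G S a := by
  ext c
  exact ⟨fun hc => SimIn.trans h hc, fun hc => SimIn.trans (SimIn.symm h) hc⟩

lemma eq_none_of_mem_clsIn_restrictArr {a b : Arrangement V R}
    (h : b ∈ clsIn G S (restrictArr a S)) {w : V} (hw : w ∉ S) : b w = none := by
  obtain ⟨⟨P, hPS, hP⟩, -⟩ := h
  rw [hP.apply_eq_of_notMem hPS hw]
  simp [restrictArr, hw]

end Configurations

section Abstraction

open Function

variable {V R : Type} {m : ℕ} {G : SimpleGraph V} {S : Fin m → Set V}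

lemma exists_isPlan_of_simIn {ι : Type*} {S : ι → Set V} (hS : Pairwise (Disjoint on S))
    (T : Finset ι) {α β : Arrangement V R}
    (hsim : ∀ i ∈ T, SimIn G (S i) (restrictArr α (S i)) (restrictArr β (S i)))
    (hout : ∀ w, (∀ i ∈ T, w ∉ S i) → β w = α w) : ∃ P, IsPlan G P α β := by
  induction T using Finset.induction_on generalizing β with
  | empty => exact ⟨[], (funext fun w => hout w (by simp)).symm⟩
  | insert j T hj ih =>
    -- first fix the subgraphs of `T`, keeping `α` on `S j`, then move within `S j`
    set γ := (S j).piecewise α β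
    have hγ : ∀ i ∈ T, restrictArr γ (S i) = restrictArr β (S i) := fun i hi =>
      restrictArr_piecewise_of_disjoint (hS (ne_of_mem_of_not_mem hi hj).symm) α β
    obtain ⟨P, hP⟩ := ih (β := γ)
      (fun i hi => hγ i hi ▸ hsim i (Finset.mem_insert_of_mem hi)) fun w hw => by
        by_cases hwj : w ∈ S j
        · simp [γ, hwj]
        · simpa [γ, hwj] using hout w (by simpa [hwj] using hw)
    obtain ⟨⟨Q, hQS, hQ⟩, -⟩ := hsim j (Finset.mem_insert_self j T)
    rw [← restrictArr_piecewise_self α β] at hQ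
    refine ⟨P ++ Q, hP.append ?_⟩
    convert hQ.piecewise_of_restrictArr hQS using 1
    funext w
    by_cases hw : w ∈ S j <;> simp [restrictArr, hw]

lemma exists_isPlan_of_gammaOf_eq (hS : Pairwise (Disjoint on S)) (hcover : ⋃ i, S i = Set.univ)
    {α β : Arrangement V R} (h : gammaOf G S α = gammaOf G S β) : ∃ P, IsPlan G P α β := by
  refine exists_isPlan_of_simIn hS Finset.univ (fun i _ => ?_) fun w hw => ?_
  · have : restrictArr β (S i) ∈ gammaOf G S β i := SimIn.refl _
    rwa [← h] at this
  · obtain ⟨i, hi⟩ := Set.iUnion_eq_univ_iff.mp hcover w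
    exact absurd hi (hw i (Finset.mem_univ i))

lemma gammaOf_applyStep_of_mem (hS : Pairwise (Disjoint on S)) {α : Arrangement V R}
    {r : R} {u v : V} {x : Fin m} (hu : u ∈ S x) (hv : v ∈ S x)
    (happ : Applicable G α (r, u, v)) : gammaOf G S (applyStep α (r, u, v)) = gammaOf G S α := by
  funext i
  by_cases hix : i = x
  · subst hix
    have happ' : Applicable G (restrictArr α (S i)) (r, u, v) := by
      simpa [Applicable, restrictArr_apply_of_mem hu, restrictArr_apply_of_mem hv] using happ
    exact (congrArg (clsIn G (S i)) (restrictArr_applyStep hv)).trans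
      (clsIn_eq_of_mem (SimIn.applyStep hu hv happ'))
  · exact congrArg (clsIn G (S i)) <| restrictArr_applyStep_of_notMem
      ((hS hix).notMem_of_mem_right hu) ((hS hix).notMem_of_mem_right hv)

lemma AbstractPlan.of_applicable (hS : Pairwise (Disjoint on S)) (hcover : ⋃ i, S i = Set.univ)
    {α : Arrangement V R} (hα : ArrInj α) {s : R × V × V} (happ : Applicable G α s)
    {γ : Fin m → Set (Arrangement V R)}
    (h : AbstractPlan G S (gammaOf G S (applyStep α s)) γ) :
    AbstractPlan G S (gammaOf G S α) γ := by
  obtain ⟨r, u, v⟩ := s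
  obtain ⟨x, hu⟩ := Set.iUnion_eq_univ_iff.mp hcover u
  obtain ⟨y, hv⟩ := Set.iUnion_eq_univ_iff.mp hcover v
  by_cases hxy : x = y
  · subst hxy
    rwa [gammaOf_applyStep_of_mem hS hu hv happ] at h
  obtain ⟨hadj, hαu, hαv⟩ := happ
  refine .step _ _ _ r u v x y hxy hu hv hadj ?_ ?_ (fun z hzx hzy => ?_) h
  · exact ⟨_, SimIn.refl _, by rwa [restrictArr_apply_of_mem hu],
      congrArg (clsIn G (S x)) (restrictArr_applyStep_of_mem_of_notMem hα hαu hu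
        ((hS hxy).notMem_of_mem_right hv))⟩
  · exact ⟨_, SimIn.refl _, by rwa [restrictArr_apply_of_mem hv],
      congrArg (clsIn G (S y)) (restrictArr_applyStep_of_notMem_of_mem
        ((hS hxy).notMem_of_mem_left hu) hv)⟩
  · exact congrArg (clsIn G (S z)) <| restrictArr_applyStep_of_notMem
      ((hS hzx).notMem_of_mem_right hu) ((hS hzy).notMem_of_mem_right hv)

lemma exists_isPlan_restrictArr_eq (hS : Pairwise (Disjoint on S))
    (hcover : ⋃ i, S i = Set.univ) {α a b : Arrangement V R} {x y : Fin m} (hxy : x ≠ y)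
    (ha : a ∈ gammaOf G S α x) (hb : b ∈ gammaOf G S α y) :
    ∃ β, restrictArr β (S x) = a ∧ restrictArr β (S y) = b ∧
      gammaOf G S β = gammaOf G S α ∧ ∃ P, IsPlan G P α β := by
  set β := (S x).piecewise a ((S y).piecewise b α)
  have hβx : restrictArr β (S x) = a := by
    rw [restrictArr_piecewise_self,
      restrictArr_eq_self (fun w => eq_none_of_mem_clsIn_restrictArr ha)]
  have hβy : restrictArr β (S y) = b := by
    rw [restrictArr_piecewise_of_disjoint (hS hxy), restrictArr_piecewise_self,
      restrictArr_eq_self (fun w => eq_none_of_mem_clsIn_restrictArr hb)]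
  have hγ : gammaOf G S β = gammaOf G S α := by
    funext i
    by_cases hix : i = x
    · subst hix; exact clsIn_eq_of_mem (hβx ▸ ha)
    by_cases hiy : i = y
    · subst hiy; exact clsIn_eq_of_mem (hβy ▸ hb)
    exact congrArg (clsIn G (S i)) <| by
      rw [restrictArr_piecewise_of_disjoint (hS (Ne.symm hix)),
        restrictArr_piecewise_of_disjoint (hS (Ne.symm hiy))]
  exact ⟨β, hβx, hβy, hγ, exists_isPlan_of_gammaOf_eq hS hcover hγ.symm⟩

lemma exists_isPlan_of_abstractStep (hS : Pairwise (Disjoint on S))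
    (hcover : ⋃ i, S i = Set.univ) {α : Arrangement V R} (hα : ArrInj α)
    {γ' : Fin m → Set (Arrangement V R)} {r : R} {u v : V} {x y : Fin m}
    (hxy : x ≠ y) (hu : u ∈ S x) (hv : v ∈ S y) (hadj : G.Adj u v)
    (hx : γ' x ∈ ominusC G (S x) (gammaOf G S α x) r u)
    (hy : γ' y ∈ oplusC G (S y) (gammaOf G S α y) r v)
    (hz : ∀ z, z ≠ x → z ≠ y → γ' z = gammaOf G S α z) :
    ∃ α', ArrInj α' ∧ gammaOf G S α' = γ' ∧ ∃ P, IsPlan G P α α' := by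
  obtain ⟨a, ha, hau, hγx⟩ := hx
  obtain ⟨b, hb, hbv, hγy⟩ := hy
  obtain ⟨β, hβx, hβy, hγβ, P, hP⟩ := exists_isPlan_restrictArr_eq hS hcover hxy ha hb
  have hβ := hP.arrInj hα
  have happ : Applicable G β (r, u, v) :=
    ⟨hadj, by rwa [← restrictArr_apply_of_mem (a := β) hu, hβx],
      by rwa [← restrictArr_apply_of_mem (a := β) hv, hβy]⟩
  refine ⟨applyStep β (r, u, v), hβ.applyStep happ, funext fun i => ?_, P ++ [(r, u, v)],
    hP.append ⟨happ, rfl⟩⟩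
  by_cases hix : i = x
  · subst hix
    rw [hγx, ← hβx]
    exact congrArg (clsIn G (S i)) (restrictArr_applyStep_of_mem_of_notMem hβ happ.2.1 hu
      ((hS hxy).notMem_of_mem_right hv))
  by_cases hiy : i = y
  · subst hiy
    rw [hγy, ← hβy]
    exact congrArg (clsIn G (S i)) (restrictArr_applyStep_of_notMem_of_mem
      ((hS hxy).notMem_of_mem_left hu) hv)
  rw [hz i hix hiy, ← hγβ]
  exact congrArg (clsIn G (S i)) (restrictArr_applyStep_of_notMem
    ((hS hix).notMem_of_mem_right hu) ((hS hiy).notMem_of_mem_right hv))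

lemma AbstractPlan.exists_isPlan (hS : Pairwise (Disjoint on S)) (hcover : ⋃ i, S i = Set.univ)
    {γ γ' : Fin m → Set (Arrangement V R)} (h : AbstractPlan G S γ γ')
    {α β : Arrangement V R} (hα : ArrInj α) (hαγ : gammaOf G S α = γ)
    (hβγ : gammaOf G S β = γ') :
    ∃ P, IsPlan G P α β := by
  induction h generalizing α with
  | refl γ => exact exists_isPlan_of_gammaOf_eq hS hcover (hαγ.trans hβγ.symm)
  | step γ γ' γ'' r u v x y hxy hu hv hadj hx hy hz _ ih =>
    subst hαγ
    obtain ⟨α', hα', hα'γ, P, hP⟩ :=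
      exists_isPlan_of_abstractStep hS hcover hα hxy hu hv hadj hx hy hz
    obtain ⟨Q, hQ⟩ := ih hα' hα'γ hβγ
    exact ⟨P ++ Q, hP.append hQ⟩

lemma IsPlan.abstractPlan (hS : Pairwise (Disjoint on S)) (hcover : ⋃ i, S i = Set.univ)
    {P : List (R × V × V)} {α β : Arrangement V R} (hP : IsPlan G P α β) (hα : ArrInj α) :
    AbstractPlan G S (gammaOf G S α) (gammaOf G S β) := by
  induction P generalizing α with
  | nil => exact (show α = β from hP) ▸ .refl _
  | cons s P ih =>
    exact .of_applicable hS hcover hα hP.1 (ih hP.2 (hα.applyStep hP.1))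

end Abstraction

theorem abstract_plan_iff_concrete_plan_general {V R : Type} {m : ℕ} (G : SimpleGraph V)
    (S : Fin m → Set V)
    (hdisj : ∀ i j, i ≠ j → Disjoint (S i) (S j))
    (hcover : (⋃ i, S i) = Set.univ)
    (α β : Arrangement V R) (hα : ArrInj α) :
    AbstractPlan G S (gammaOf G S α) (gammaOf G S β) ↔
      ∃ P : List (R × V × V), IsPlan G P α β :=
  ⟨fun h => h.exists_isPlan hdisj hcover hα rfl rfl,
    fun ⟨_, hP⟩ => hP.abstractPlan hdisj hcover hα⟩

/-- Soundness and completeness of subgraph abstraction: for arrangements `α` and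
`β` of `G` with a partition into induced subgraphs, there exists an abstract plan
from `γ(α)` to `γ(β)` if and only if there exists a concrete plan from `α` to `β`
in `G`. -/
theorem abstract_plan_iff_concrete_plan {V R : Type} {m : ℕ} (G : SimpleGraph V)
    (S : Fin m → Set V)
    (hdisj : ∀ i j, i ≠ j → Disjoint (S i) (S j))
    (hcover : (⋃ i, S i) = Set.univ)
    (α β : Arrangement V R) (hα : ArrInj α) (hβ : ArrInj β) :
    AbstractPlan G S (gammaOf G S α) (gammaOf G S β) ↔
      ∃ P : List (R × V × V), IsPlan G P α β :=
  abstract_plan_iff_concrete_plan_general G S hdisj hcover α β hα
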